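/- arXiv:2006.04353 — 3 statements merged into one kernel-verified Lean document; each statement's English description precedes it below -/
import Mathlib

section
/- Let (X_t)_{t∈ℕ} be as in the drift setting with deterministic initial value X_0 = x₀. Then for every t ≥ 0 and every b ∈ ℝ, ℙ(X_t ≥ b) ≤ ρ^t e^{η(x₀ − b)} + ((1 − ρ^t)/(1 − ρ)) e^{ν + η(B − b)}. -/
/-!
With `Y t = exp (η X t)`, the quadratic bound `exp z ≤ 1 + z + (z/ν)² (exp ν - ν - 1)` for
`|z| ≤ ν` and the drift condition give `E[Y (t+1); X t > B] ≤ (1 + η²c - ηα) E[Y t; X t > B]`,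
and `1 + η²c - ηα ≤ ρ` by the choice of `η`. On `X t ≤ B` a single step keeps
`Y (t+1) ≤ exp (ν + ηB)`. Hence `E[Y (t+1)] ≤ ρ E[Y t] + exp (ν + ηB)`; unrolling this recursion and
applying Chernoff's bound `ℙ(X t ≥ b) ≤ exp (-ηb) E[Y t]` gives the claim.
-/

open MeasureTheory ProbabilityTheory Real

theorem Real.exp_le_one_add_add_sq_div_mul {z ν : ℝ} (hν : 0 < ν) (hz : |z| ≤ ν) :
    exp z ≤ 1 + z + (z / ν) ^ 2 * (exp ν - ν - 1) := by
  have tail (x : ℝ) : HasSum (fun n ↦ x ^ (n + 2) / (n + 2).factorial) (exp x - 1 - x) := by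
    have := (hasSum_nat_add_iff' 2).mpr (exp_eq_exp_ℝ ▸ NormedSpace.expSeries_div_hasSum_exp x)
    simpa [Finset.sum_range_succ, sub_sub] using this
  have hterm (n : ℕ) : z ^ (n + 2) / (n + 2).factorial ≤
      (z / ν) ^ 2 * (ν ^ (n + 2) / (n + 2).factorial) := by
    have hpow : z ^ (n + 2) ≤ z ^ 2 * ν ^ n :=
      calc z ^ (n + 2) ≤ |z| ^ 2 * |z| ^ n := by
            rw [← pow_add, add_comm, ← abs_pow]; exact le_abs_self _
        _ ≤ z ^ 2 * ν ^ n := by rw [sq_abs]; gcongr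
    have hrw : (z / ν) ^ 2 * (ν ^ (n + 2) / (n + 2).factorial)
        = z ^ 2 * ν ^ n / (n + 2).factorial := by
      field_simp; ring
    rw [hrw]; gcongr
  linarith [hasSum_le hterm (tail z) ((tail ν).mul_left ((z / ν) ^ 2))]

theorem le_pow_mul_add_geom_of_le_mul_add {a : ℕ → ℝ} {ρ K : ℝ} (hρ0 : 0 ≤ ρ) (hρ1 : ρ ≠ 1)
    (h : ∀ t, a (t + 1) ≤ ρ * a t + K) (t : ℕ) :
    a t ≤ ρ ^ t * a 0 + (1 - ρ ^ t) / (1 - ρ) * K := by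
  induction t with
  | zero => simp
  | succ t ih =>
    have h1 : 1 - ρ ≠ 0 := sub_ne_zero.mpr hρ1.symm
    calc a (t + 1) ≤ ρ * (ρ ^ t * a 0 + (1 - ρ ^ t) / (1 - ρ) * K) + K := by
          nlinarith [h t]
      _ = ρ ^ (t + 1) * a 0 + (1 - ρ ^ (t + 1)) / (1 - ρ) * K := by
          field_simp; ring

theorem integral_mul_condExp {Ω : Type*} {m m₀ : MeasurableSpace Ω} {μ : Measure Ω}
    (hm : m ≤ m₀) [SigmaFinite (μ.trim hm)] {f g : Ω → ℝ} (hf : StronglyMeasurable[m] f)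
    (hfg : Integrable (f * g) μ) (hg : Integrable g μ) :
    ∫ ω, f ω * μ[g | m] ω ∂μ = ∫ ω, f ω * g ω ∂μ :=
  calc ∫ ω, f ω * μ[g | m] ω ∂μ = ∫ ω, μ[f * g | m] ω ∂μ :=
        integral_congr_ae (condExp_mul_of_stronglyMeasurable_left hf hfg hg).symm
    _ = ∫ ω, f ω * g ω ∂μ := integral_condExp hm

theorem setIntegral_mul_le_of_condExp_le {Ω : Type*} {m m₀ : MeasurableSpace Ω} {μ : Measure Ω}
    [IsFiniteMeasure μ] (hm : m ≤ m₀) {s : Set Ω} (hs : MeasurableSet[m] s) {f g : Ω → ℝ}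
    {a C : ℝ} (hf : StronglyMeasurable[m] f) (hf0 : 0 ≤ f) (hfC : ∀ᵐ ω ∂μ, f ω ≤ C)
    (hg : Integrable g μ) (hcond : ∀ᵐ ω ∂μ, ω ∈ s → μ[g | m] ω ≤ a) :
    ∫ ω in s, f ω * g ω ∂μ ≤ a * ∫ ω in s, f ω ∂μ := by
  set F := s.indicator f
  have hF : StronglyMeasurable[m] F := hf.indicator hs
  have hFC : ∀ᵐ ω ∂μ, ‖F ω‖ ≤ C := by
    filter_upwards [hfC] with ω hω
    rw [Real.norm_of_nonneg (Set.indicator_nonneg (fun ω _ ↦ hf0 ω) ω)]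
    exact (Set.indicator_le_self' (fun ω _ ↦ hf0 ω) ω).trans hω
  have hFm : AEStronglyMeasurable F μ := (hF.mono hm).aestronglyMeasurable
  have hFcond : ∀ᵐ ω ∂μ, F ω * μ[g | m] ω ≤ a * F ω := by
    filter_upwards [hcond] with ω hω
    by_cases hωs : ω ∈ s
    · simp only [F, Set.indicator_of_mem hωs]
      rw [mul_comm a]
      exact mul_le_mul_of_nonneg_left (hω hωs) (hf0 ω)
    · simp [F, Set.indicator_of_notMem hωs]
  calc ∫ ω in s, f ω * g ω ∂μ = ∫ ω, F ω * g ω ∂μ := by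
        simp only [F, ← integral_indicator (hm s hs), Set.indicator_mul_left]
    _ = ∫ ω, F ω * μ[g | m] ω ∂μ :=
        (integral_mul_condExp hm hF (hg.bdd_mul hFm hFC) hg).symm
    _ ≤ ∫ ω, a * F ω ∂μ :=
        integral_mono_ae (integrable_condExp.bdd_mul hFm hFC)
          ((Integrable.of_bound hFm C hFC).const_mul a) hFcond
    _ = a * ∫ ω in s, f ω ∂μ := by
        rw [integral_const_mul, integral_indicator (hm s hs)]

theorem Real.exp_mul_le_of_abs_sub_le {x y η ν : ℝ} (hν : 0 < ν) (hη0 : 0 ≤ η) (hη1 : η ≤ 1)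
    (h : |y - x| ≤ ν) :
    exp (η * y) ≤ exp (η * x) * (1 + η * (y - x) + η ^ 2 * (exp ν - ν - 1)) := by
  have hz : |η * (y - x)| ≤ ν := by
    rw [abs_mul, abs_of_nonneg hη0]; nlinarith [abs_nonneg (y - x)]
  have hsq : (η * (y - x) / ν) ^ 2 ≤ η ^ 2 := by
    rw [div_pow, div_le_iff₀ (by positivity), mul_pow]
    exact mul_le_mul_of_nonneg_left (sq_le_sq' (abs_le.mp h).1 (abs_le.mp h).2) (sq_nonneg η)
  have hc : 0 ≤ exp ν - ν - 1 := by linarith [add_one_le_exp ν]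
  calc exp (η * y) = exp (η * x) * exp (η * (y - x)) := by rw [← exp_add]; ring_nf
    _ ≤ exp (η * x) * (1 + η * (y - x) + (η * (y - x) / ν) ^ 2 * (exp ν - ν - 1)) := by
        gcongr; exact exp_le_one_add_add_sq_div_mul hν hz
    _ ≤ exp (η * x) * (1 + η * (y - x) + η ^ 2 * (exp ν - ν - 1)) := by gcongr

section DriftProcess

variable {Ω : Type*} {m : MeasurableSpace Ω} {μ : Measure Ω} {ℱ : Filtration ℕ m}
  {X : ℕ → Ω → ℝ} {t : ℕ} {ν α B η ρ C : ℝ}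

theorem ae_le_add_mul_of_abs_sub_le (hinc : ∀ t, ∀ᵐ ω ∂μ, |X (t + 1) ω - X t ω| ≤ ν) (t : ℕ) :
    ∀ᵐ ω ∂μ, X t ω ≤ X 0 ω + t * ν := by
  induction t with
  | zero => simp
  | succ t ih =>
    filter_upwards [hinc t, ih] with ω hω ih
    push_cast
    linarith [(abs_le.mp hω).2]

theorem integrable_exp_mul_of_ae_le [IsFiniteMeasure μ] {Z : Ω → ℝ} (hZ : Measurable Z)
    (hC : ∀ᵐ ω ∂μ, exp (η * Z ω) ≤ C) : Integrable (fun ω ↦ exp (η * Z ω)) μ :=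
  Integrable.of_bound (by fun_prop) C <| by
    filter_upwards [hC] with ω hω
    rwa [norm_of_nonneg (exp_pos _).le]

theorem setIntegral_exp_mul_succ_le_of_drift [IsFiniteMeasure μ] (hX : Adapted ℱ X)
    (hν : 0 < ν) (hη0 : 0 ≤ η) (hη1 : η ≤ 1)
    (hinc : ∀ᵐ ω ∂μ, |X (t + 1) ω - X t ω| ≤ ν)
    (hdrift : ∀ᵐ ω ∂μ, X t ω > B → μ[fun ω' ↦ X (t + 1) ω' - X t ω' | ℱ t] ω ≤ -α)
    (hC : ∀ᵐ ω ∂μ, exp (η * X t ω) ≤ C)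
    (hint : Integrable (fun ω ↦ exp (η * X (t + 1) ω)) μ) :
    ∫ ω in {ω | B < X t ω}, exp (η * X (t + 1) ω) ∂μ ≤
      (1 + η ^ 2 * (exp ν - ν - 1) - η * α) * ∫ ω in {ω | B < X t ω}, exp (η * X t ω) ∂μ := by
  set A := {ω | B < X t ω}
  set c := exp ν - ν - 1
  have hA : MeasurableSet[ℱ t] A := measurableSet_lt measurable_const (hX t)
  have hY : StronglyMeasurable[ℱ t] (fun ω ↦ exp (η * X t ω)) :=
    ((hX t).const_mul η).exp.stronglyMeasurable
  have hXm (s : ℕ) : Measurable (X s) := (hX s).mono (ℱ.le s) le_rfl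
  have hYint : Integrable (fun ω ↦ exp (η * X t ω)) μ := integrable_exp_mul_of_ae_le (hXm t) hC
  have hΔint : Integrable (fun ω ↦ X (t + 1) ω - X t ω) μ :=
    Integrable.of_bound ((hXm (t + 1)).sub (hXm t)).aestronglyMeasurable ν
      (by simpa only [norm_eq_abs] using hinc)
  have hYΔint : Integrable (fun ω ↦ exp (η * X t ω) * (X (t + 1) ω - X t ω)) μ :=
    hΔint.bdd_mul hYint.1 (by filter_upwards [hC] with ω hω; rwa [norm_of_nonneg (exp_pos _).le])
  have hcond := setIntegral_mul_le_of_condExp_le (ℱ.le t) hA hY (fun ω ↦ (exp_pos _).le) hC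
    hΔint hdrift
  calc ∫ ω in A, exp (η * X (t + 1) ω) ∂μ
      ≤ ∫ ω in A, ((1 + η ^ 2 * c) * exp (η * X t ω) +
          η * (exp (η * X t ω) * (X (t + 1) ω - X t ω))) ∂μ := by
        refine setIntegral_mono_ae_restrict hint.integrableOn
          ((hYint.const_mul _).add (hYΔint.const_mul _)).integrableOn (ae_restrict_of_ae ?_)
        filter_upwards [hinc] with ω hω
        linarith [exp_mul_le_of_abs_sub_le hν hη0 hη1 hω]
    _ = (1 + η ^ 2 * c) * ∫ ω in A, exp (η * X t ω) ∂μ +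
          η * ∫ ω in A, exp (η * X t ω) * (X (t + 1) ω - X t ω) ∂μ := by
        rw [integral_add (hYint.const_mul _).integrableOn (hYΔint.const_mul _).integrableOn,
          integral_const_mul, integral_const_mul]
    _ ≤ (1 + η ^ 2 * c - η * α) * ∫ ω in A, exp (η * X t ω) ∂μ := by
        nlinarith [mul_le_mul_of_nonneg_left hcond hη0]

theorem mgf_succ_le_of_drift [IsProbabilityMeasure μ] (hX : Adapted ℱ X)
    (hν : 0 < ν) (hη0 : 0 ≤ η) (hη1 : η ≤ 1)
    (hρ : 1 + η ^ 2 * (exp ν - ν - 1) - η * α ≤ ρ) (hρ0 : 0 ≤ ρ)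
    (hinc : ∀ᵐ ω ∂μ, |X (t + 1) ω - X t ω| ≤ ν)
    (hdrift : ∀ᵐ ω ∂μ, X t ω > B → μ[fun ω' ↦ X (t + 1) ω' - X t ω' | ℱ t] ω ≤ -α)
    (hC : ∀ᵐ ω ∂μ, exp (η * X t ω) ≤ C)
    (hint : Integrable (fun ω ↦ exp (η * X (t + 1) ω)) μ) :
    mgf (X (t + 1)) μ η ≤ ρ * mgf (X t) μ η + exp (ν + η * B) := by
  set A := {ω | B < X t ω}
  have hXt : Measurable (X t) := (hX t).mono (ℱ.le t) le_rfl
  have hA : MeasurableSet A := measurableSet_lt measurable_const hXt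
  have hYint : Integrable (fun ω ↦ exp (η * X t ω)) μ := integrable_exp_mul_of_ae_le hXt hC
  have habove : ∫ ω in A, exp (η * X (t + 1) ω) ∂μ ≤ ρ * mgf (X t) μ η :=
    calc ∫ ω in A, exp (η * X (t + 1) ω) ∂μ
        ≤ (1 + η ^ 2 * (exp ν - ν - 1) - η * α) * ∫ ω in A, exp (η * X t ω) ∂μ :=
          setIntegral_exp_mul_succ_le_of_drift hX hν hη0 hη1 hinc hdrift hC hint
      _ ≤ ρ * ∫ ω, exp (η * X t ω) ∂μ := by
          gcongr
          exacts [ae_of_all _ fun ω ↦ (exp_pos _).le, Measure.restrict_le_self]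
  -- Below `B`, one step of size at most `ν` keeps `η X` below `ηB + ν` since `η ≤ 1`.
  have hbelow : ∫ ω in Aᶜ, exp (η * X (t + 1) ω) ∂μ ≤ exp (ν + η * B) := by
    have hbound : ∀ᵐ ω ∂μ, ω ∈ Aᶜ → ‖exp (η * X (t + 1) ω)‖ ≤ exp (ν + η * B) := by
      filter_upwards [hinc] with ω hω hωA
      have hXB : X t ω ≤ B := not_lt.mp hωA
      rw [norm_of_nonneg (exp_pos _).le, exp_le_exp]
      nlinarith [(abs_le.mp hω).2]
    calc ∫ ω in Aᶜ, exp (η * X (t + 1) ω) ∂μ ≤ ‖∫ ω in Aᶜ, exp (η * X (t + 1) ω) ∂μ‖ :=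
          le_norm_self _
      _ ≤ exp (ν + η * B) * μ.real Aᶜ :=
          norm_setIntegral_le_of_norm_le_const_ae' (measure_lt_top _ _) hbound
      _ ≤ exp (ν + η * B) := mul_le_of_le_one_right (exp_pos _).le measureReal_le_one
  rw [mgf, ← integral_add_compl hA hint]
  exact add_le_add habove hbelow

end DriftProcess

theorem stmt_1_general
    {Ω : Type*} {m : MeasurableSpace Ω} {μ : Measure Ω} [IsProbabilityMeasure μ]
    (ℱ : Filtration ℕ m)
    (X : ℕ → Ω → ℝ) (hXadapted : Adapted ℱ X)
    (x₀ ν α B η ρ : ℝ)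
    (hX0 : ∀ ω, X 0 ω = x₀)
    (hν : 0 < ν)
    (hinc : ∀ t : ℕ, ∀ᵐ ω ∂μ, |X (t + 1) ω - X t ω| ≤ ν)
    (hdrift : ∀ t : ℕ, ∀ᵐ ω ∂μ,
      X t ω > B → (μ[fun ω' => X (t + 1) ω' - X t ω' | ℱ t]) ω ≤ -α)
    (hη0 : 0 < η) (hη1 : η ≤ min 1 (α / (2 * (Real.exp ν - ν - 1))))
    (hρ : ρ = 1 - η * α / 2) (hρ0 : 0 < ρ) (hρ1 : ρ < 1) :
    ∀ t : ℕ, ∀ b : ℝ, (μ {ω | X t ω ≥ b}).toReal ≤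
      ρ ^ t * Real.exp (η * (x₀ - b)) +
        ((1 - ρ ^ t) / (1 - ρ)) * Real.exp (ν + η * (B - b)) := by
  intro t b
  have hc : 0 < exp ν - ν - 1 := by linarith [add_one_lt_exp hν.ne']
  have hη1' : η ≤ 1 := hη1.trans (min_le_left _ _)
  have hηc : η * (exp ν - ν - 1) ≤ α / 2 := by
    have := hη1.trans (min_le_right _ _)
    rw [le_div_iff₀ (by positivity)] at this
    linarith
  have hρ' : 1 + η ^ 2 * (exp ν - ν - 1) - η * α ≤ ρ := by nlinarith
  have hXm (s : ℕ) : Measurable (X s) := (hXadapted s).mono (ℱ.le s) le_rfl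
  have hC (s : ℕ) : ∀ᵐ ω ∂μ, exp (η * X s ω) ≤ exp (η * (x₀ + s * ν)) := by
    filter_upwards [ae_le_add_mul_of_abs_sub_le hinc s] with ω hω
    rw [hX0] at hω
    gcongr
  have hmgf := le_pow_mul_add_geom_of_le_mul_add (a := fun s ↦ mgf (X s) μ η) hρ0.le hρ1.ne
    (fun s ↦ mgf_succ_le_of_drift hXadapted hν hη0.le hη1' hρ' hρ0.le (hinc s) (hdrift s) (hC s)
      (integrable_exp_mul_of_ae_le (hXm (s + 1)) (hC (s + 1)))) t
  have hchernoff := measure_ge_le_exp_mul_mgf b hη0.le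
    (integrable_exp_mul_of_ae_le (hXm t) (hC t))
  have hmgf0 : mgf (X 0) μ η = exp (η * x₀) := by simp [mgf, hX0]
  calc (μ {ω | X t ω ≥ b}).toReal ≤ exp (-η * b) * mgf (X t) μ η := hchernoff
    _ ≤ exp (-η * b) * (ρ ^ t * exp (η * x₀) + (1 - ρ ^ t) / (1 - ρ) * exp (ν + η * B)) := by
        rw [← hmgf0]; gcongr
    _ = ρ ^ t * exp (η * (x₀ - b)) + (1 - ρ ^ t) / (1 - ρ) * exp (ν + η * (B - b)) := by
        simp only [mul_add, mul_left_comm (exp (-η * b)), ← exp_add]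
        ring_nf

/-- Hajek-type tail bound: for a process with bounded increments, negative drift
above level `B`, and deterministic initial value `x₀`,
`ℙ(X t ≥ b) ≤ ρ^t e^{η(x₀ − b)} + ((1 − ρ^t)/(1 − ρ)) e^{ν + η(B − b)}`. -/
theorem stmt_1
    {Ω : Type*} {m : MeasurableSpace Ω} {μ : Measure Ω} [IsProbabilityMeasure μ]
    (ℱ : Filtration ℕ m)
    (X : ℕ → Ω → ℝ) (hXadapted : Adapted ℱ X)
    (x₀ ν α B η ρ : ℝ)
    (hX0 : ∀ ω, X 0 ω = x₀)
    (hν : 0 < ν)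
    (hinc : ∀ t : ℕ, ∀ᵐ ω ∂μ, |X (t + 1) ω - X t ω| ≤ ν)
    (hα : 0 < α) (hB : 0 < B)
    (hdrift : ∀ t : ℕ, ∀ᵐ ω ∂μ,
      X t ω > B → (μ[fun ω' => X (t + 1) ω' - X t ω' | ℱ t]) ω ≤ -α)
    (hη0 : 0 < η) (hη1 : η ≤ min 1 (α / (2 * (Real.exp ν - ν - 1))))
    (hρ : ρ = 1 - η * α / 2) (hρ0 : 0 < ρ) (hρ1 : ρ < 1) :
    ∀ t : ℕ, ∀ b : ℝ, (μ {ω | X t ω ≥ b}).toReal ≤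
      ρ ^ t * Real.exp (η * (x₀ - b)) +
        ((1 - ρ ^ t) / (1 - ρ)) * Real.exp (ν + η * (B - b)) :=
  stmt_1_general ℱ X hXadapted x₀ ν α B η ρ hX0 hν hinc hdrift hη0 hη1 hρ hρ0 hρ1
end

section
/- Let (X_t)_{t∈ℕ} be as in the drift setting with deterministic initial value X_0 = x₀, and for a ∈ ℝ define the hitting time T_a = inf{t ≥ 0 : X_t ≤ a}. Then for every a ≥ B, the expected hitting time satisfies E[T_a] ≤ e^{η(x₀ − a)}/(1 − ρ); in particular E[T_a] < ∞. -/
open MeasureTheory Real ENNReal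
open scoped Nat

/-! The process `exp (η (X_t - a))`, killed once `X` has entered `(-∞, a]`, contracts in mean by
the factor `ρ` at every step: for an increment `d` with `|d| ≤ ν` and `η ≤ 1` the power series of
`exp` gives `exp (η d) ≤ 1 + η d + η² c`, and by the drift condition the conditional mean of the
right-hand side is at most `1 - η α + η² c ≤ ρ` on `{X_t > a} ⊆ {X_t > B}`. The killed process is
at least `1` on `{T_a > t}`, so Markov's inequality gives `ℙ(T_a > t) ≤ ρ^t e^{η (x₀ - a)}`, and
`E[T_a] = ∑_t ℙ(T_a > t)` is bounded by the geometric series. -/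

lemma hasSum_exp_sub_one_sub (x : ℝ) :
    HasSum (fun n : ℕ => x ^ (n + 2) / (n + 2)!) (exp x - 1 - x) := by
  have h := (hasSum_nat_add_iff' 2).2 (exp_eq_exp_ℝ ▸ NormedSpace.expSeries_div_hasSum_exp x)
  simpa [Finset.sum_range_succ, sub_sub] using h

lemma exp_mul_le_one_add_mul_add_sq_mul {η x y : ℝ} (hη0 : 0 ≤ η) (hη1 : η ≤ 1)
    (hxy : |x| ≤ y) : exp (η * x) ≤ 1 + η * x + η ^ 2 * (exp y - y - 1) := by
  have hterm (n : ℕ) : (η * x) ^ (n + 2) / (n + 2)! ≤ η ^ 2 * (y ^ (n + 2) / (n + 2)!) := by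
    rw [← mul_div_assoc]
    gcongr
    calc (η * x) ^ (n + 2) ≤ η ^ (n + 2) * |x| ^ (n + 2) := by
          rw [← mul_pow, ← abs_of_nonneg hη0, ← abs_mul, abs_of_nonneg hη0]
          exact (le_abs_self _).trans (abs_pow _ _).le
      _ ≤ η ^ 2 * y ^ (n + 2) :=
          mul_le_mul (pow_le_pow_of_le_one hη0 hη1 (by omega))
            (pow_le_pow_left₀ (abs_nonneg x) hxy _) (by positivity) (by positivity)
  have := hasSum_le hterm (hasSum_exp_sub_one_sub (η * x)) ((hasSum_exp_sub_one_sub y).mul_left _)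
  linarith

lemma mul_le_div_two_of_le_div {η α c : ℝ} (hα : 0 ≤ α) (hc : 0 ≤ c) (hη : η ≤ α / (2 * c)) :
    η * c ≤ α / 2 := by
  rcases hc.eq_or_lt with rfl | hpos
  · rw [mul_zero]; positivity
  · rwa [le_div_iff₀ (by positivity), mul_left_comm, ← le_div_iff₀' two_pos] at hη

open scoped Classical in
lemma iInf_natCast_eq_tsum_ite (p : ℕ → Prop) :
    ⨅ (t : ℕ) (_ : p t), (t : ℝ≥0∞) = ∑' n : ℕ, if ∀ s ≤ n, ¬ p s then 1 else 0 := by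
  by_cases h : ∃ t, p t
  · have hfind : ⨅ (t : ℕ) (_ : p t), (t : ℝ≥0∞) = Nat.find h :=
      le_antisymm (iInf₂_le _ (Nat.find_spec h))
        (le_iInf₂ fun t ht => Nat.cast_le.2 (Nat.find_le ht))
    simp_rw [hfind, ← Nat.lt_find_iff h]
    rw [tsum_eq_sum (s := Finset.range (Nat.find h)) (by simp_all),
      Finset.sum_congr rfl fun n hn => if_pos (Finset.mem_range.1 hn)]
    simp
  · push Not at h
    simp [h]

lemma integral_mul_le_of_condExp_le {Ω : Type*} {m m₀ : MeasurableSpace Ω} {μ : Measure Ω}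
    [IsFiniteMeasure μ] (hm : m ≤ m₀) {f h : Ω → ℝ} {c : ℝ} (hh : StronglyMeasurable[m] h)
    (hh0 : 0 ≤ h) (hhi : Integrable h μ) (hf : Integrable f μ) (hhf : Integrable (h * f) μ)
    (hc : ∀ᵐ ω ∂μ, 0 < h ω → μ[f | m] ω ≤ c) :
    ∫ ω, h ω * f ω ∂μ ≤ c * ∫ ω, h ω ∂μ := by
  have hpull : μ[h * f | m] =ᵐ[μ] h * μ[f | m] := condExp_mul_of_stronglyMeasurable_left hh hhf hf
  calc ∫ ω, h ω * f ω ∂μ = ∫ ω, (h * μ[f | m]) ω ∂μ := by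
        rw [← integral_congr_ae hpull, integral_condExp hm]; rfl
    _ ≤ ∫ ω, c * h ω ∂μ := by
        refine integral_mono_ae (integrable_condExp.congr hpull) (hhi.const_mul c) ?_
        filter_upwards [hc] with ω hω
        rcases (hh0 ω).eq_or_lt with h0 | hpos
        · simp [← h0]
        · simpa [mul_comm c] using mul_le_mul_of_nonneg_left (hω hpos) hpos.le
    _ = c * ∫ ω, h ω ∂μ := integral_const_mul c _

section Drift

variable {Ω : Type*} {m : MeasurableSpace Ω} {μ : Measure Ω} {ℱ : Filtration ℕ m}
  {X : ℕ → Ω → ℝ} {a η : ℝ} {t : ℕ}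

-- the event `{T_a > t}`
def survivalSet (X : ℕ → Ω → ℝ) (a : ℝ) (t : ℕ) : Set Ω := {ω | ∀ s ≤ t, a < X s ω}

noncomputable def killedExp (X : ℕ → Ω → ℝ) (a η : ℝ) (t : ℕ) : Ω → ℝ :=
  (survivalSet X a t).indicator fun ω => exp (η * (X t ω - a))

lemma measurableSet_survivalSet (hX : Adapted ℱ X) (a : ℝ) (t : ℕ) :
    MeasurableSet[ℱ t] (survivalSet X a t) := by
  simp only [survivalSet, Set.ofPred_forall]
  exact .iInter fun s => .iInter fun hs =>
    measurableSet_lt measurable_const ((hX s).mono (ℱ.mono hs) le_rfl)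

lemma survivalSet_succ_subset : survivalSet X a (t + 1) ⊆ survivalSet X a t :=
  fun _ hω s hs => hω s (hs.trans t.le_succ)

lemma stronglyMeasurable_killedExp (hX : Adapted ℱ X) :
    StronglyMeasurable[ℱ t] (killedExp X a η t) :=
  ((((hX t).sub_const a).const_mul η).exp.indicator
    (measurableSet_survivalSet hX a t)).stronglyMeasurable

lemma killedExp_nonneg (ω : Ω) : 0 ≤ killedExp X a η t ω :=
  Set.indicator_nonneg (fun _ _ => (exp_pos _).le) ω

lemma killedExp_le (ω : Ω) : killedExp X a η t ω ≤ exp (η * (X t ω - a)) :=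
  Set.indicator_le_self' (fun _ _ => (exp_pos _).le) ω

lemma one_le_killedExp (hη : 0 ≤ η) {ω : Ω} (hω : ω ∈ survivalSet X a t) :
    1 ≤ killedExp X a η t ω := by
  rw [killedExp, Set.indicator_of_mem hω]
  exact one_le_exp (mul_nonneg hη (sub_nonneg.2 (hω t le_rfl).le))

lemma lt_of_killedExp_pos {ω : Ω} (hω : 0 < killedExp X a η t ω) : a < X t ω :=
  Set.mem_of_indicator_ne_zero hω.ne' t le_rfl

lemma killedExp_succ_le (ω : Ω) :
    killedExp X a η (t + 1) ω ≤ killedExp X a η t ω * exp (η * (X (t + 1) ω - X t ω)) := by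
  by_cases hω : ω ∈ survivalSet X a (t + 1)
  · rw [killedExp, killedExp, Set.indicator_of_mem hω,
      Set.indicator_of_mem (survivalSet_succ_subset hω), ← exp_add]
    exact (congrArg exp (by ring)).le
  · rw [killedExp, Set.indicator_of_notMem hω]
    exact mul_nonneg (killedExp_nonneg ω) (exp_pos _).le

lemma lintegral_eq_tsum_measure_survivalSet (hX : Adapted ℱ X) {T : Ω → ℝ≥0∞}
    (hT : ∀ ω, T ω = ⨅ (t : ℕ) (_ : X t ω ≤ a), (t : ℝ≥0∞)) :
    ∫⁻ ω, T ω ∂μ = ∑' t, μ (survivalSet X a t) := by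
  have hA (t : ℕ) : MeasurableSet (survivalSet X a t) :=
    ℱ.le t _ (measurableSet_survivalSet hX a t)
  calc ∫⁻ ω, T ω ∂μ = ∫⁻ ω, ∑' t, (survivalSet X a t).indicator 1 ω ∂μ := by
        refine lintegral_congr fun ω => ?_
        simp only [hT, iInf_natCast_eq_tsum_ite, Set.indicator_apply, survivalSet, not_le,
          Set.mem_ofPred_eq, Pi.one_apply]
    _ = ∑' t, μ (survivalSet X a t) := by
        rw [lintegral_tsum fun t => (measurable_one.indicator (hA t)).aemeasurable]
        exact tsum_congr fun t => lintegral_indicator_one (hA t)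

section FiniteMeasure

variable [IsFiniteMeasure μ]

lemma integrable_killedExp (hX : Adapted ℱ X) {x₀ ν : ℝ} (hX0 : ∀ ω, X 0 ω = x₀) (hη : 0 ≤ η)
    (hinc : ∀ t : ℕ, ∀ᵐ ω ∂μ, |X (t + 1) ω - X t ω| ≤ ν) (t : ℕ) :
    Integrable (killedExp X a η t) μ := by
  have hmeas (t : ℕ) : AEStronglyMeasurable (killedExp X a η t) μ :=
    ((stronglyMeasurable_killedExp hX).mono (ℱ.le t)).aestronglyMeasurable
  induction t with
  | zero =>
    refine .of_bound (hmeas 0) (exp (η * (x₀ - a))) (.of_forall fun ω => ?_)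
    rw [norm_of_nonneg (killedExp_nonneg ω), ← hX0 ω]
    exact killedExp_le ω
  | succ t ih =>
    refine (ih.const_mul (exp (η * ν))).mono' (hmeas (t + 1)) ?_
    filter_upwards [hinc t] with ω hω
    rw [norm_of_nonneg (killedExp_nonneg ω), mul_comm]
    refine (killedExp_succ_le ω).trans (mul_le_mul_of_nonneg_left ?_ (killedExp_nonneg ω))
    exact exp_le_exp.2 (mul_le_mul_of_nonneg_left (le_of_abs_le hω) hη)

lemma integral_killedExp_succ_le (hX : Adapted ℱ X) {ν α : ℝ}
    (hint : Integrable (killedExp X a η t) μ) (hinc : ∀ᵐ ω ∂μ, |X (t + 1) ω - X t ω| ≤ ν)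
    (hdrift : ∀ᵐ ω ∂μ, a < X t ω → (μ[fun ω' => X (t + 1) ω' - X t ω' | ℱ t]) ω ≤ -α)
    (hη0 : 0 ≤ η) (hη1 : η ≤ 1) (hηc : η * (exp ν - ν - 1) ≤ α / 2) :
    ∫ ω, killedExp X a η (t + 1) ω ∂μ ≤ (1 - η * α / 2) * ∫ ω, killedExp X a η t ω ∂μ := by
  set g := killedExp X a η t
  set Δ : Ω → ℝ := fun ω => X (t + 1) ω - X t ω
  set c := exp ν - ν - 1
  have hXm (s : ℕ) : Measurable (X s) := (hX s).mono (ℱ.le s) le_rfl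
  have hΔ : Integrable Δ μ := .of_bound ((hXm _).sub (hXm _)).aestronglyMeasurable ν hinc
  have hgΔ : Integrable (fun ω => g ω * Δ ω) μ :=
    hint.mul_bdd hΔ.aestronglyMeasurable hinc
  have hdrift_int : ∫ ω, g ω * Δ ω ∂μ ≤ -α * ∫ ω, g ω ∂μ :=
    integral_mul_le_of_condExp_le (ℱ.le t) (stronglyMeasurable_killedExp hX)
      killedExp_nonneg hint hΔ hgΔ
      (by filter_upwards [hdrift] with ω hω hpos using hω (lt_of_killedExp_pos hpos))
  have hIg : 0 ≤ ∫ ω, g ω ∂μ := integral_nonneg killedExp_nonneg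
  calc ∫ ω, killedExp X a η (t + 1) ω ∂μ
      ≤ ∫ ω, ((1 + η ^ 2 * c) * g ω + η * (g ω * Δ ω)) ∂μ := by
        refine integral_mono_of_nonneg (.of_forall killedExp_nonneg)
          ((hint.const_mul _).add (hgΔ.const_mul _)) ?_
        filter_upwards [hinc] with ω hω
        calc killedExp X a η (t + 1) ω ≤ g ω * exp (η * Δ ω) := killedExp_succ_le ω
          _ ≤ g ω * (1 + η * Δ ω + η ^ 2 * c) := mul_le_mul_of_nonneg_left
              (exp_mul_le_one_add_mul_add_sq_mul hη0 hη1 hω) (killedExp_nonneg ω)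
          _ = (1 + η ^ 2 * c) * g ω + η * (g ω * Δ ω) := by ring
    _ = (1 + η ^ 2 * c) * ∫ ω, g ω ∂μ + η * ∫ ω, g ω * Δ ω ∂μ := by
        rw [integral_add (hint.const_mul _) (hgΔ.const_mul _), integral_const_mul,
          integral_const_mul]
    _ ≤ (1 - η * α / 2) * ∫ ω, g ω ∂μ := by
        nlinarith [mul_le_mul_of_nonneg_left hdrift_int hη0,
          mul_le_mul_of_nonneg_right (mul_le_mul_of_nonneg_left hηc hη0) hIg]

lemma measure_survivalSet_le (hη : 0 ≤ η) (hint : Integrable (killedExp X a η t) μ) :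
    μ (survivalSet X a t) ≤ ENNReal.ofReal (∫ ω, killedExp X a η t ω ∂μ) := by
  have hmarkov := mul_meas_ge_le_integral_of_nonneg (.of_forall killedExp_nonneg) hint 1
  rw [one_mul] at hmarkov
  calc μ (survivalSet X a t) ≤ μ {ω | 1 ≤ killedExp X a η t ω} :=
        measure_mono fun ω hω => one_le_killedExp hη hω
    _ = ENNReal.ofReal (μ.real {ω | 1 ≤ killedExp X a η t ω}) := (ofReal_measureReal).symm
    _ ≤ ENNReal.ofReal (∫ ω, killedExp X a η t ω ∂μ) := ofReal_le_ofReal hmarkov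

end FiniteMeasure

lemma integral_killedExp_le [IsProbabilityMeasure μ] (hX : Adapted ℱ X) {x₀ ν α : ℝ}
    (hX0 : ∀ ω, X 0 ω = x₀) (hinc : ∀ t : ℕ, ∀ᵐ ω ∂μ, |X (t + 1) ω - X t ω| ≤ ν)
    (hdrift : ∀ t : ℕ, ∀ᵐ ω ∂μ,
      a < X t ω → (μ[fun ω' => X (t + 1) ω' - X t ω' | ℱ t]) ω ≤ -α)
    (hη0 : 0 ≤ η) (hη1 : η ≤ 1) (hηc : η * (exp ν - ν - 1) ≤ α / 2)
    (hρ : 0 ≤ 1 - η * α / 2) (t : ℕ) :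
    ∫ ω, killedExp X a η t ω ∂μ ≤ (1 - η * α / 2) ^ t * exp (η * (x₀ - a)) := by
  have hint := integrable_killedExp (μ := μ) (a := a) hX hX0 hη0 hinc
  refine (le_geom (u := fun t => ∫ ω, killedExp X a η t ω ∂μ) hρ t fun k _ =>
    integral_killedExp_succ_le hX (hint k) (hinc k) (hdrift k) hη0 hη1 hηc).trans ?_
  gcongr
  calc ∫ ω, killedExp X a η 0 ω ∂μ ≤ ∫ _, exp (η * (x₀ - a)) ∂μ :=
        integral_mono (hint 0) (integrable_const _) fun ω => hX0 ω ▸ killedExp_le ω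
    _ = exp (η * (x₀ - a)) := by simp

end Drift

theorem stmt_3_general
    {Ω : Type*} {m : MeasurableSpace Ω} {μ : Measure Ω} [IsProbabilityMeasure μ]
    (ℱ : Filtration ℕ m)
    (X : ℕ → Ω → ℝ) (hXadapted : Adapted ℱ X)
    (x₀ ν α B η ρ : ℝ)
    (hX0 : ∀ ω, X 0 ω = x₀)
    (hinc : ∀ t : ℕ, ∀ᵐ ω ∂μ, |X (t + 1) ω - X t ω| ≤ ν)
    (hα : 0 < α)
    (hdrift : ∀ t : ℕ, ∀ᵐ ω ∂μ,
      X t ω > B → (μ[fun ω' => X (t + 1) ω' - X t ω' | ℱ t]) ω ≤ -α)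
    (hη0 : 0 < η) (hη1 : η ≤ min 1 (α / (2 * (Real.exp ν - ν - 1))))
    (hρ : ρ = 1 - η * α / 2) (hρ0 : 0 < ρ) (hρ1 : ρ < 1)
    (a : ℝ) (ha : a ≥ B)
    (T : Ω → ℝ≥0∞)
    (hT : ∀ ω, T ω = ⨅ (t : ℕ) (_ : X t ω ≤ a), (t : ℝ≥0∞)) :
    ∫⁻ ω, T ω ∂μ ≤ ENNReal.ofReal (Real.exp (η * (x₀ - a)) / (1 - ρ)) ∧
      ∫⁻ ω, T ω ∂μ < ⊤ := by
  have hη1' : η ≤ 1 := hη1.trans (min_le_left _ _)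
  have hηc : η * (exp ν - ν - 1) ≤ α / 2 :=
    mul_le_div_two_of_le_div hα.le (by linarith [add_one_le_exp ν]) (hη1.trans (min_le_right _ _))
  have hdrift_a (t : ℕ) : ∀ᵐ ω ∂μ,
      a < X t ω → (μ[fun ω' => X (t + 1) ω' - X t ω' | ℱ t]) ω ≤ -α := by
    filter_upwards [hdrift t] with ω hω hlt using hω (ha.trans_lt hlt)
  have hint := integrable_killedExp (μ := μ) (a := a) hXadapted hX0 hη0.le hinc
  have hdecay (t : ℕ) := hρ ▸ integral_killedExp_le hXadapted hX0 hinc hdrift_a hη0.le hη1' hηc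
    (hρ ▸ hρ0.le) t
  set K := exp (η * (x₀ - a))
  have hmain : ∫⁻ ω, T ω ∂μ ≤ ENNReal.ofReal (K / (1 - ρ)) := calc
    ∫⁻ ω, T ω ∂μ = ∑' t, μ (survivalSet X a t) := lintegral_eq_tsum_measure_survivalSet hXadapted hT
    _ ≤ ∑' t, ENNReal.ofReal (ρ ^ t * K) := ENNReal.tsum_le_tsum fun t =>
        (measure_survivalSet_le hη0.le (hint t)).trans (ofReal_le_ofReal (hdecay t))
    _ = ENNReal.ofReal (K / (1 - ρ)) := by
        rw [← ENNReal.ofReal_tsum_of_nonneg (fun t => by positivity)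
          ((summable_geometric_of_lt_one hρ0.le hρ1).mul_right K), tsum_mul_right,
          tsum_geometric_of_lt_one hρ0.le hρ1, div_eq_inv_mul]
  exact ⟨hmain, hmain.trans_lt ofReal_lt_top⟩

/-- Expected hitting-time bound: for a process with bounded increments, negative
drift above level `B`, and deterministic initial value `x₀`, the hitting time
`T_a = inf {t : X t ≤ a}` (valued in `ℝ≥0∞`, with `inf ∅ = ∞`) satisfies
`E[T_a] ≤ e^{η(x₀ − a)}/(1 − ρ) < ∞` for every `a ≥ B`. -/
theorem stmt_3
    {Ω : Type*} {m : MeasurableSpace Ω} {μ : Measure Ω} [IsProbabilityMeasure μ]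
    (ℱ : Filtration ℕ m)
    (X : ℕ → Ω → ℝ) (hXadapted : Adapted ℱ X)
    (x₀ ν α B η ρ : ℝ)
    (hX0 : ∀ ω, X 0 ω = x₀)
    (hν : 0 < ν)
    (hinc : ∀ t : ℕ, ∀ᵐ ω ∂μ, |X (t + 1) ω - X t ω| ≤ ν)
    (hα : 0 < α) (hB : 0 < B)
    (hdrift : ∀ t : ℕ, ∀ᵐ ω ∂μ,
      X t ω > B → (μ[fun ω' => X (t + 1) ω' - X t ω' | ℱ t]) ω ≤ -α)
    (hη0 : 0 < η) (hη1 : η ≤ min 1 (α / (2 * (Real.exp ν - ν - 1))))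
    (hρ : ρ = 1 - η * α / 2) (hρ0 : 0 < ρ) (hρ1 : ρ < 1)
    (a : ℝ) (ha : a ≥ B)
    (T : Ω → ℝ≥0∞)
    (hT : ∀ ω, T ω = ⨅ (t : ℕ) (_ : X t ω ≤ a), (t : ℝ≥0∞)) :
    ∫⁻ ω, T ω ∂μ ≤ ENNReal.ofReal (Real.exp (η * (x₀ - a)) / (1 - ρ)) ∧
      ∫⁻ ω, T ω ∂μ < ⊤ :=
  stmt_3_general ℱ X hXadapted x₀ ν α B η ρ hX0 hinc hα hdrift hη0 hη1 hρ hρ0 hρ1 a ha T hT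
end

section
/- Under the Boltzmann policy setting with argmax set A* and gap Δ, the total variation distance between the softmax distribution P* and the uniform-over-argmax policy π* satisfies ‖P* − π*‖_TV ≤ (|A| − 1) e^{−Δ/τ}. -/
/-!
Off the argmax set each softmax weight is at most `e^{(Q a - max Q)/τ} ≤ e^{-Δ/τ}`, and there
are at most `|A| - 1` such actions. On the argmax set the softmax weights are all equal and
hence at most `1/|A*|`, so `P*` lies below `π*` there; since both have total mass one, the
`ℓ¹` distance is twice the mass `P*` puts outside `A*`.
-/

open Real Finset

theorem sum_abs_sub_eq_two_mul_sum_compl {A : Type*} [Fintype A] [DecidableEq A]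
    {p q : A → ℝ} {s : Finset A} (hp : ∀ a, 0 ≤ p a) (hsum : ∑ a, p a = ∑ a, q a)
    (hle : ∀ a ∈ s, p a ≤ q a) (hzero : ∀ a ∉ s, q a = 0) :
    ∑ a, |p a - q a| = 2 * ∑ a ∈ sᶜ, p a := by
  have hq : ∑ a ∈ s, q a = ∑ a, p a := by
    rw [hsum, ← sum_add_sum_compl s q, sum_eq_zero (fun a ha => hzero a (mem_compl.1 ha)),
      add_zero]
  have on_s : ∑ a ∈ s, |p a - q a| = ∑ a ∈ sᶜ, p a := by
    rw [sum_congr rfl fun a ha => abs_of_nonpos (sub_nonpos.2 (hle a ha)), sum_neg_distrib,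
      sum_sub_distrib, hq, ← sum_add_sum_compl s p]
    ring
  have off_s : ∑ a ∈ sᶜ, |p a - q a| = ∑ a ∈ sᶜ, p a :=
    sum_congr rfl fun a ha => by rw [hzero a (mem_compl.1 ha), sub_zero, abs_of_nonneg (hp a)]
  rw [← sum_add_sum_compl s, on_s, off_s, two_mul]

noncomputable def uniformOn {A : Type*} [DecidableEq A] (s : Finset A) (a : A) : ℝ :=
  if a ∈ s then 1 / (#s : ℝ) else 0

theorem sum_uniformOn {A : Type*} [Fintype A] [DecidableEq A] {s : Finset A}
    (hs : s.Nonempty) : ∑ a, uniformOn s a = 1 := by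
  simp only [uniformOn]
  rw [sum_ite_mem, univ_inter, sum_const, nsmul_eq_mul, mul_one_div,
    div_self (Nat.cast_ne_zero.2 hs.card_pos.ne')]

section Softmax

variable {A : Type*} [Fintype A]

noncomputable def softmax (x : A → ℝ) (a : A) : ℝ := exp (x a) / ∑ b, exp (x b)

theorem softmax_nonneg (x : A → ℝ) (a : A) : 0 ≤ softmax x a := by
  unfold softmax; positivity

theorem sum_softmax [Nonempty A] (x : A → ℝ) : ∑ a, softmax x a = 1 := by
  unfold softmax
  rw [← sum_div, div_self (sum_pos (fun b _ => exp_pos (x b)) univ_nonempty).ne']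

theorem softmax_le_exp_sub (x : A → ℝ) (a b : A) : softmax x a ≤ exp (x a - x b) := by
  rw [softmax, exp_sub]
  exact div_le_div_of_nonneg_left (exp_pos _).le (exp_pos _)
    (single_le_sum (fun c _ => (exp_pos (x c)).le) (mem_univ b))

theorem softmax_le_one_div_card {x : A → ℝ} {s : Finset A} {a : A} (ha : a ∈ s)
    (hconst : ∀ b ∈ s, x b = x a) : softmax x a ≤ 1 / #s := by
  have hcard : 0 < (#s : ℝ) := Nat.cast_pos.2 (card_pos.2 ⟨a, ha⟩)
  have hmass : #s * exp (x a) ≤ ∑ b, exp (x b) :=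
    calc #s * exp (x a) = ∑ b ∈ s, exp (x b) := by
          rw [sum_congr rfl fun b hb => by rw [hconst b hb], sum_const, nsmul_eq_mul]
      _ ≤ ∑ b, exp (x b) :=
          sum_le_sum_of_subset_of_nonneg (subset_univ s) fun b _ _ => (exp_pos (x b)).le
  rw [softmax, div_le_div_iff₀ (lt_of_lt_of_le (by positivity) hmass) hcard, one_mul, mul_comm]
  exact hmass

end Softmax

/-- Total variation bound between the softmax distribution `P*` of `Q*` and the
uniform-over-argmax policy `π*`: `‖P* − π*‖_TV ≤ (|A| − 1) e^{−Δ/τ}`, where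
`Δ` is the gap between the maximal value of `Q*` and its maximal value outside
the argmax set `A*` (assumed to be a proper subset of `A`). -/
theorem stmt_9 {A : Type*} [Fintype A] [Nonempty A] [DecidableEq A]
    (τ : ℝ) (hτ : 0 < τ) (Qs : A → ℝ)
    (Astar : Finset A)
    (hAstar : ∀ a, a ∈ Astar ↔ ∀ b, Qs b ≤ Qs a)
    (hne : (Astarᶜ).Nonempty)
    (Δ : ℝ)
    (hΔ : Δ = Finset.univ.sup' Finset.univ_nonempty Qs - (Astarᶜ).sup' hne Qs)
    (Ps πs : A → ℝ)
    (hPs : ∀ a, Ps a = Real.exp (Qs a / τ) / ∑ a', Real.exp (Qs a' / τ))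
    (hπ : ∀ a, πs a = if a ∈ Astar then 1 / (Astar.card : ℝ) else 0) :
    (1 / 2) * ∑ a, |Ps a - πs a| ≤
      ((Fintype.card A : ℝ) - 1) * Real.exp (-Δ / τ) := by
  obtain ⟨a₀, -, ha₀⟩ := exists_max_image univ Qs univ_nonempty
  have ha₀_mem : a₀ ∈ Astar := (hAstar a₀).2 fun b => ha₀ b (mem_univ b)
  have hmax : univ.sup' univ_nonempty Qs = Qs a₀ :=
    le_antisymm (sup'_le _ _ fun b _ => ha₀ b (mem_univ b)) (le_sup' Qs (mem_univ a₀))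
  have hlevel : ∀ a ∈ Astar, ∀ b ∈ Astar, Qs b = Qs a := fun a ha b hb =>
    le_antisymm ((hAstar a).1 ha b) ((hAstar b).1 hb a)
  set P := softmax fun a => Qs a / τ
  rw [show Ps = P from funext hPs, show πs = uniformOn Astar from funext hπ]
  have htv : ∑ a, |P a - uniformOn Astar a| = 2 * ∑ a ∈ Astarᶜ, P a :=
    sum_abs_sub_eq_two_mul_sum_compl (softmax_nonneg _)
      (by rw [sum_softmax, sum_uniformOn ⟨a₀, ha₀_mem⟩])
      (fun a ha => by
        rw [uniformOn, if_pos ha]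
        exact softmax_le_one_div_card ha fun b hb => by rw [hlevel a ha b hb])
      (fun a ha => if_neg ha)
  have hout : ∀ a ∈ Astarᶜ, P a ≤ exp (-Δ / τ) := fun a ha =>
    (softmax_le_exp_sub _ a a₀).trans <| exp_le_exp.2 <| by
      rw [← sub_div]
      gcongr
      linarith [le_sup' Qs ha]
  have hcard : (#Astarᶜ : ℝ) ≤ Fintype.card A - 1 := by
    rw [le_sub_iff_add_le]
    exact_mod_cast (card_compl_lt_iff_nonempty Astar).2 ⟨a₀, ha₀_mem⟩
  calc (1 / 2) * ∑ a, |P a - uniformOn Astar a| = ∑ a ∈ Astarᶜ, P a := by rw [htv]; ring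
    _ ≤ #Astarᶜ * exp (-Δ / τ) := by rw [← nsmul_eq_mul, ← sum_const]; exact sum_le_sum hout
    _ ≤ _ := by gcongr
end
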